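/- arXiv:0903.1139 — 7 statements merged into one kernel-verified Lean document; each statement's English description precedes it below -/
import Mathlib

section
/- Given a 3SAT instance with n variables (labelled 1..n) and m clauses, construct n+m+1 CSP variables: for i in [1,n], X_i has domain {i, -i}; for each clause j (say the j-th clause is x ∨ ¬y ∨ z), X_{n+j} has domain {x, -y, z}. Then there exists an assignment of values to X_1,...,X_{n+m} from their domains using exactly n distinct values if and only if the 3SAT instance is satisfiable. -/
/-- Integer encoding of a literal: the positive literal `x_i` (for `i : Fin n`)
is encoded as `i+1`, and its negation as `-(i+1)`. -/
def litVal {n : ℕ} (p : Fin n × Bool) : ℤ :=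
  if p.2 then ((p.1 : ℕ) : ℤ) + 1 else -(((p.1 : ℕ) : ℤ) + 1)

lemma litVal_inj {n : ℕ} : Function.Injective (litVal (n := n)) := by
  rintro ⟨i, b⟩ ⟨j, c⟩ h
  have hi : ((i : ℕ) : ℤ) + 1 > 0 := by positivity
  have hj : ((j : ℕ) : ℤ) + 1 > 0 := by positivity
  rcases b <;> rcases c <;> simp only [litVal, if_true, if_false, Bool.false_eq_true] at h <;>
    simp_all <;> omega

/-- NValue construction: `X_i ∈ {i, -i}` for `i ≤ n`, and for each clause `j`
(a disjunction of three literals) a variable `Y_j` ranging over the encoded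
literals of the clause.  An assignment from the domains uses exactly `n`
distinct values iff the 3SAT instance is satisfiable. -/
theorem stmt0 (n m : ℕ) (clause : Fin m → Fin 3 → Fin n × Bool) :
    (∃ (X : Fin n → ℤ) (Y : Fin m → ℤ),
      (∀ i, X i = litVal (i, true) ∨ X i = litVal (i, false)) ∧
      (∀ j, ∃ k, Y j = litVal (clause j k)) ∧
      (Finset.image X Finset.univ ∪ Finset.image Y Finset.univ).card = n) ↔
    (∃ a : Fin n → Bool, ∀ j, ∃ k, a (clause j k).1 = (clause j k).2) := by
  constructor
  · rintro ⟨X, Y, hX, hY, hcard⟩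
    -- extract assignment
    have hXa : ∀ i, ∃ b, X i = litVal (i, b) := by
      intro i
      rcases hX i with h | h
      exacts [⟨true, h⟩, ⟨false, h⟩]
    choose a ha using hXa
    refine ⟨a, fun j => ?_⟩
    have hXinj : Function.Injective X := by
      intro i i' h
      rw [ha i, ha i'] at h
      exact congrArg Prod.fst (litVal_inj h)
    have hcardX : (Finset.image X Finset.univ).card = n := by
      rw [Finset.card_image_of_injective _ hXinj, Finset.card_univ, Fintype.card_fin]
    have hsub : Finset.image X Finset.univ ⊆
        Finset.image X Finset.univ ∪ Finset.image Y Finset.univ :=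
      Finset.subset_union_left
    have heq : Finset.image X Finset.univ =
        Finset.image X Finset.univ ∪ Finset.image Y Finset.univ :=
      Finset.eq_of_subset_of_card_le hsub (by omega)
    obtain ⟨k, hk⟩ := hY j
    have hmem : Y j ∈ Finset.image X Finset.univ := by
      rw [heq]
      exact Finset.mem_union_right _ (Finset.mem_image_of_mem _ (Finset.mem_univ j))
    obtain ⟨i, -, hi⟩ := Finset.mem_image.mp hmem
    have : litVal (i, a i) = litVal (clause j k) := by rw [← ha, hi, hk]
    have := litVal_inj this
    refine ⟨k, ?_⟩
    rw [← congrArg Prod.fst this, ← congrArg Prod.snd this]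
  · rintro ⟨a, ha⟩
    choose k hk using ha
    refine ⟨fun i => litVal (i, a i), fun j => litVal (clause j (k j)),
      fun i => ?_, fun j => ⟨k j, rfl⟩, ?_⟩
    · cases h : a i
      · exact Or.inr (by simp only []; rw [h])
      · exact Or.inl (by simp only []; rw [h])
    · have hXinj : Function.Injective (fun i : Fin n => litVal (i, a i)) := by
        intro i i' h
        exact congrArg Prod.fst (litVal_inj h)
      have hsub : Finset.image (fun j => litVal (clause j (k j))) Finset.univ ⊆
          Finset.image (fun i : Fin n => litVal (i, a i)) Finset.univ := by
        intro v hv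
        obtain ⟨j, -, hj⟩ := Finset.mem_image.mp hv
        refine Finset.mem_image.mpr ⟨(clause j (k j)).1, Finset.mem_univ _, ?_⟩
        rw [← hj]
        congr 1
        exact Prod.ext rfl (hk j)
      rw [Finset.union_eq_left.mpr hsub,
        Finset.card_image_of_injective _ hXinj, Finset.card_univ, Fintype.card_fin]
end

section
/- Given a 3SAT instance with n Boolean variables and m clauses, define CSP variables X_1,...,X_n with X_i ∈ {i, -i}, and Y_1,...,Y_m where, if the j-th clause is x ∨ ¬y ∨ z, then Y_j ∈ {x, -y, z}. Then the constraint Disjoint([X_1,...,X_n],[Y_1,...,Y_m]) — requiring X_i ≠ Y_j for all i,j — has a satisfying assignment if and only if the 3SAT formula is satisfiable. -/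
/-- Disjoint construction: `X_i ∈ {i, -i}`, and for each clause `j` a variable
`Y_j` ranging over the encoded literals of the clause.  The `Disjoint`
constraint (`X_i ≠ Y_j` for all `i, j`) has a satisfying assignment from the
domains iff the 3SAT instance is satisfiable. -/
theorem stmt1 (n m : ℕ) (clause : Fin m → Fin 3 → Fin n × Bool) :
    (∃ (X : Fin n → ℤ) (Y : Fin m → ℤ),
      (∀ i, X i = litVal (i, true) ∨ X i = litVal (i, false)) ∧
      (∀ j, ∃ k, Y j = litVal (clause j k)) ∧
      (∀ i j, X i ≠ Y j)) ↔
    (∃ a : Fin n → Bool, ∀ j, ∃ k, a (clause j k).1 = (clause j k).2) := by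
  have hinj : ∀ (p q : Fin n × Bool), litVal p = litVal q → p = q := by
    rintro ⟨i, b⟩ ⟨i', b'⟩ h
    simp only [litVal] at h
    have hi : (i : ℕ) = (i' : ℕ) ∧ b = b' := by
      cases b <;> cases b' <;> simp_all <;> omega
    exact Prod.ext (Fin.ext hi.1) hi.2
  constructor
  · rintro ⟨X, Y, hX, hY, hne⟩
    refine ⟨fun i => decide (X i = litVal (i, false)), fun j => ?_⟩
    obtain ⟨k, hk⟩ := hY j
    refine ⟨k, ?_⟩
    have hib : X (clause j k).1 ≠ litVal (clause j k) := hk ▸ hne (clause j k).1 j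
    set i := (clause j k).1 with hi
    rcases hX i with h | h
    · -- X i = litVal (i, true)
      have hb : (clause j k).2 = false := by
        by_contra hb
        rw [Bool.not_eq_false] at hb
        exact hib (by rw [h]; congr 1; exact Prod.ext rfl hb.symm)
      rw [hb]
      simp [h]
      intro hc
      simpa using congrArg Prod.snd (hinj _ _ hc)
    · have hb : (clause j k).2 = true := by
        by_contra hb
        rw [Bool.not_eq_true] at hb
        exact hib (by rw [h]; congr 1; exact Prod.ext rfl hb.symm)
      rw [hb]
      simp [h]
  · rintro ⟨a, ha⟩
    refine ⟨fun i => litVal (i, ! a i), fun j => litVal (clause j ((ha j).choose)), ?_, ?_, ?_⟩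
    · intro i; rcases Bool.eq_false_or_eq_true (a i) with h | h <;> simp [h]
    · intro j; exact ⟨(ha j).choose, rfl⟩
    · intro i j h
      have heq := hinj _ _ h
      have hk := (ha j).choose_spec
      rw [← heq] at hk
      simp at hk
end

section
/- Given a 3SAT instance with n variables and m clauses, define integer variables D_1,...,D_n with D_i ∈ {i, -i} and X_1,...,X_m where, if the j-th clause is x ∨ ¬y ∨ z, then X_j ∈ {x, -y, z}. Then there exists an assignment from these domains such that every X_j takes a value in {D_1,...,D_n} (i.e., |{j : ∃i, X_j = D_i}| = m) if and only if the 3SAT formula is satisfiable. -/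
lemma litVal_inj_s2 {n : ℕ} {p q : Fin n × Bool} (h : litVal p = litVal q) : p = q := by
  obtain ⟨i, b⟩ := p
  obtain ⟨i', b'⟩ := q
  have hi : (i : ℕ) = (i' : ℕ) ∧ b = b' := by
    cases b <;> cases b' <;> simp [litVal] at h <;> first | exact ⟨by omega, rfl⟩ | exact absurd h (by omega)
  simp [Fin.ext_iff, hi.1, hi.2]

/-- Among construction: `D_i ∈ {i, -i}`, and for each clause `j` a variable
`X_j` ranging over the encoded literals of the clause.  There is an assignment
from the domains in which every `X_j` takes a value among `{D_1, …, D_n}`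
(i.e. `|{j : ∃ i, X_j = D_i}| = m`) iff the 3SAT instance is satisfiable. -/
theorem stmt2 (n m : ℕ) (clause : Fin m → Fin 3 → Fin n × Bool) :
    (∃ (D : Fin n → ℤ) (X : Fin m → ℤ),
      (∀ i, D i = litVal (i, true) ∨ D i = litVal (i, false)) ∧
      (∀ j, ∃ k, X j = litVal (clause j k)) ∧
      (Finset.univ.filter fun j => ∃ i, X j = D i).card = m) ↔
    (∃ a : Fin n → Bool, ∀ j, ∃ k, a (clause j k).1 = (clause j k).2) := by
  constructor
  · rintro ⟨D, X, hD, hX, hcard⟩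
    -- from card, every j satisfies the predicate
    have hall : ∀ j, ∃ i, X j = D i := by
      have hsub : (Finset.univ.filter fun j => ∃ i, X j = D i) ⊆ Finset.univ :=
        Finset.filter_subset _ _
      have : (Finset.univ.filter fun j => ∃ i, X j = D i) = Finset.univ := by
        apply Finset.eq_of_subset_of_card_le hsub
        simp [hcard]
      intro j
      have := Finset.mem_filter.mp (this ▸ Finset.mem_univ j)
      exact this.2
    -- b' i = the bool such that D i = litVal (i, b' i)
    have hb' : ∀ i, ∃ c : Bool, D i = litVal (i, c) := by
      intro i
      rcases hD i with h | h
      exacts [⟨true, h⟩, ⟨false, h⟩]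
    choose c hc using hb'
    refine ⟨c, fun j => ?_⟩
    obtain ⟨k, hk⟩ := hX j
    obtain ⟨i, hi⟩ := hall j
    rw [hk, hc i] at hi
    have := litVal_inj_s2 hi
    refine ⟨k, ?_⟩
    rw [show (clause j k).1 = i from congrArg Prod.fst this,
        show (clause j k).2 = c i from congrArg Prod.snd this]
  · rintro ⟨a, ha⟩
    choose k hk using ha
    refine ⟨fun i => litVal (i, a i), fun j => litVal (clause j (k j)), ?_, ?_, ?_⟩
    · intro i; cases h : a i <;> simp [h]
    · intro j; exact ⟨k j, rfl⟩
    · have : (Finset.univ.filter fun j => ∃ i, litVal (clause j (k j)) = litVal (i, a i))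
          = Finset.univ := by
        apply Finset.eq_univ_of_forall
        intro j
        simp only [Finset.mem_filter, Finset.mem_univ, true_and]
        refine ⟨(clause j (k j)).1, ?_⟩
        congr 1
        exact Prod.ext rfl (hk j).symm
      simp [this]
end

section
/- If the problem GACSupport(C) (deciding whether a given value v for a variable X has a support on constraint C under domain D) is polynomial-time decidable for a class of constraints C, then NoGACWipeOut(C) (deciding whether there exists a nonempty subdomain D' ⊆ D such that every value in D' has support on C within D') is also polynomial-time decidable, and conversely. -/
/-- Value `v` of variable `i` has a support on constraint `C` in domain `D`:
some tuple allowed by `C`, lying within the domains, assigns `v` to `i`. -/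
def hasSupport {ι V : Type*} (C : Set (ι → V)) (D : ι → Set V) (i : ι) (v : V) : Prop :=
  ∃ t ∈ C, (∀ k, t k ∈ D k) ∧ t i = v

/-- `D` is generalised arc consistent for `C`: every value of every variable
has a support within `D`. -/
def isGAC {ι V : Type*} (C : Set (ι → V)) (D : ι → Set V) : Prop :=
  ∀ i, ∀ v ∈ D i, hasSupport C D i v

/-- Inter-reducibility of GACSupport and NoGACWipeOut (the mathematical content
of the polynomial reductions in each direction):
(1) `v` has a support on `C` in `D` iff there is a nonempty GAC subdomain of
`D` restricted so that the domain of `X` is `{v}` (GACSupport reduces to one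
NoGACWipeOut call);
(2) there is a nonempty GAC subdomain of `D` iff some value of the (arbitrary
fixed) variable `X` has a support, i.e. NoGACWipeOut reduces to polynomially
many GACSupport calls, one per value in `D(X)`. -/
theorem stmt3 {ι V : Type*} [DecidableEq ι] (C : Set (ι → V)) (D : ι → Set V)
    (hfin : ∀ i, (D i).Finite) (X : ι) :
    (∀ v ∈ D X,
      (hasSupport C D X v ↔
        ∃ D' : ι → Set V, (∀ i, D' i ⊆ Function.update D X {v} i) ∧
          (∀ i, (D' i).Nonempty) ∧ isGAC C D')) ∧
    ((∃ D' : ι → Set V, (∀ i, D' i ⊆ D i) ∧ (∀ i, (D' i).Nonempty) ∧ isGAC C D') ↔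
      ∃ v ∈ D X, hasSupport C D X v) := by
  constructor
  · intro v hv
    constructor
    · rintro ⟨t, htC, htD, htX⟩
      refine ⟨fun i => {t i}, ?_, fun i => ⟨t i, rfl⟩, ?_⟩
      · intro i
        rcases eq_or_ne i X with rfl | h
        · simp [Function.update_self, htX]
        · simp only [Function.update_of_ne h, Set.singleton_subset_iff]
          exact htD i
      · rintro i w rfl
        exact ⟨t, htC, fun k => rfl, rfl⟩
    · rintro ⟨D', hsub, hne, hgac⟩
      obtain ⟨w, hw⟩ := hne X
      have hwv : w = v := by
        have := hsub X hw
        simpa [Function.update_self] using this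
      obtain ⟨t, htC, htD, htX⟩ := hgac X w hw
      refine ⟨t, htC, fun k => ?_, htX.trans hwv⟩
      have := hsub k (htD k)
      rcases eq_or_ne k X with rfl | h
      · rw [Function.update_self] at this
        simp only [Set.mem_singleton_iff] at this
        exact this ▸ hv
      · rwa [Function.update_of_ne h] at this
  · constructor
    · rintro ⟨D', hsub, hne, hgac⟩
      obtain ⟨w, hw⟩ := hne X
      obtain ⟨t, htC, htD, htX⟩ := hgac X w hw
      exact ⟨w, hsub X hw, t, htC, fun k => hsub k (htD k), htX⟩
    · rintro ⟨v, hv, t, htC, htD, htX⟩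
      refine ⟨fun i => {t i}, fun i x hx => hx ▸ htD i, fun i => ⟨t i, rfl⟩, ?_⟩
      rintro i w rfl
      exact ⟨t, htC, fun k => rfl, rfl⟩
end

section
/- Given two graphs G_1 = (V, E_1) and G_2 = (V, E_2) on the same vertex set, define for each vertex a variable with domain {r_1,g_1,b_1,r_2,g_2,b_2} and a constraint C on all variables that holds iff either (all variables take values with subscript 1 and adjacent vertices in E_1 differ) or (all variables take values with subscript 2 and adjacent vertices in E_2 differ). Then the subdomain assigning {r_1,g_1,b_1} to every variable is the (unique) maximal GAC subdomain of the full domain if and only if G_1 is 3-colourable and G_2 is not 3-colourable. -/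
lemma exists_col {V : Type*} {G : SimpleGraph V} (h : G.Colorable 3) (v0 : V) (c : Fin 3) :
    ∃ g : V → Fin 3, g v0 = c ∧ ∀ u v, G.Adj u v → g u ≠ g v := by
  obtain ⟨C⟩ := h
  refine ⟨fun v => Equiv.swap (C v0) c (C v), by simp, ?_⟩
  intro u v huv heq
  exact C.valid huv ((Equiv.swap (C v0) c).injective heq)


/-- The constraint of the D^P-completeness construction: every variable takes a
subscript-1 colour (`Sum.inl`) forming a proper 3-colouring of `G₁`, or every
variable takes a subscript-2 colour (`Sum.inr`) forming a proper 3-colouring of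
`G₂`. -/
def twoColC {V : Type*} (G1 G2 : SimpleGraph V) : Set (V → Fin 3 ⊕ Fin 3) :=
  {f | (∃ g : V → Fin 3, (∀ v, f v = Sum.inl (g v)) ∧ ∀ u v, G1.Adj u v → g u ≠ g v) ∨
       (∃ g : V → Fin 3, (∀ v, f v = Sum.inr (g v)) ∧ ∀ u v, G2.Adj u v → g u ≠ g v)}

/-- The subdomain `{r₁,g₁,b₁}` (on every variable) is the maximal GAC
subdomain of the full domain `{r₁,g₁,b₁,r₂,g₂,b₂}` iff `G₁` is 3-colourable
and `G₂` is not. -/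
theorem stmt7 {V : Type*} [Nonempty V] (G1 G2 : SimpleGraph V) :
    (isGAC (twoColC G1 G2) (fun _ : V => Set.range Sum.inl) ∧
      ¬∃ D' : V → Set (Fin 3 ⊕ Fin 3),
        (∀ v, Set.range Sum.inl ⊆ D' v) ∧ (∃ v, D' v ≠ Set.range Sum.inl) ∧
        isGAC (twoColC G1 G2) D') ↔
    (G1.Colorable 3 ∧ ¬ G2.Colorable 3) := by
  constructor
  · rintro ⟨h1, h2⟩
    obtain ⟨t, htC, hD, ht⟩ := h1 (Classical.arbitrary V) (Sum.inl 0) ⟨0, rfl⟩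
    have hc1 : G1.Colorable 3 := by
      rcases htC with ⟨g, hg, hprop⟩ | ⟨g, hg, hprop⟩
      · exact ⟨SimpleGraph.Coloring.mk g (fun {u v} h => hprop u v h)⟩
      · exfalso
        obtain ⟨c, hc⟩ := hD (Classical.arbitrary V)
        rw [hg] at hc; simp at hc
    refine ⟨hc1, fun hc2 => h2 ⟨fun _ => Set.univ, fun _ => Set.subset_univ _,
      ⟨⟨Classical.arbitrary V, fun h => by
        have : (Sum.inr 0 : Fin 3 ⊕ Fin 3) ∈ Set.range (Sum.inl : Fin 3 → Fin 3 ⊕ Fin 3) := by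
          rw [← h]; trivial
        simp at this⟩, ?_⟩⟩⟩
    rintro i (c | c) -
    · obtain ⟨g, hgi, hprop⟩ := exists_col hc1 i c
      exact ⟨fun k => Sum.inl (g k), Or.inl ⟨g, fun _ => rfl, hprop⟩,
        fun _ => trivial, by simp [hgi]⟩
    · obtain ⟨g, hgi, hprop⟩ := exists_col hc2 i c
      exact ⟨fun k => Sum.inr (g k), Or.inr ⟨g, fun _ => rfl, hprop⟩,
        fun _ => trivial, by simp [hgi]⟩
  · rintro ⟨hc1, hc2⟩
    constructor
    · rintro i v ⟨c, rfl⟩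
      obtain ⟨g, hgi, hprop⟩ := exists_col hc1 i c
      exact ⟨fun k => Sum.inl (g k), Or.inl ⟨g, fun _ => rfl, hprop⟩,
        fun k => ⟨g k, rfl⟩, by simp [hgi]⟩
    · rintro ⟨D', hsub, ⟨v, hv⟩, hgac⟩
      obtain ⟨x, hx, hnx⟩ := Set.exists_of_ssubset ((hsub v).ssubset_of_ne (Ne.symm hv))
      obtain c | c := x
      · exact hnx ⟨c, rfl⟩
      obtain ⟨t, htC, hD, ht⟩ := hgac v (Sum.inr c) hx
      rcases htC with ⟨g, hg, hprop⟩ | ⟨g, hg, hprop⟩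
      · rw [hg] at ht; simp at ht
      · exact hc2 ⟨SimpleGraph.Coloring.mk g (fun {u v} h => hprop u v h)⟩
end

section
/- Given a connected graph G = (V, E) with |E| ≥ 1, there exists a finite walk v_1, v_2, ..., v_m in G (consecutive vertices adjacent) that traverses every edge of G at least once. Consequently, assigning each vertex a variable with domain {1,2,3}, the constraint requiring X_{v_i} ≠ X_{v_{i+1}} to hold for all m−1 consecutive pairs in the walk is satisfiable iff G is 3-colourable. -/
open SimpleGraph

private lemma cover_walk {V : Type*} (G : SimpleGraph V) (hconn : G.Connected)
    (u0 : V) (L : List (Sym2 V)) (hL : ∀ e ∈ L, e ∈ G.edgeSet) :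
    ∃ w : G.Walk u0 u0, ∀ e ∈ L, e ∈ w.edges := by
  induction L with
  | nil => exact ⟨Walk.nil, by simp⟩
  | cons e L ih =>
    obtain ⟨w, hw⟩ := ih (fun e' he' => hL e' (List.mem_cons_of_mem _ he'))
    induction e using Sym2.ind with
    | _ a b =>
      have hab : G.Adj a b := (G.mem_edgeSet).1 (hL _ (List.mem_cons_self ..))
      obtain ⟨w1⟩ := hconn u0 a
      obtain ⟨w2⟩ := hconn b u0
      refine ⟨w1.append ((Walk.cons hab w2).append w), fun e' he' => ?_⟩
      rcases List.mem_cons.1 he' with h | h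
      · subst h
        simp [Walk.edges_append, Walk.edges_cons]
      · simp only [Walk.edges_append, Walk.edges_cons, List.mem_append, List.mem_cons]
        exact Or.inr (Or.inr (hw _ h))

private lemma chain_key {V : Type*} {G : SimpleGraph V} {u v : V} (w : G.Walk u v)
    (f : V → Fin 3) (h : List.Chain' (· ≠ ·) (w.support.map f)) :
    ∀ x y : V, s(x, y) ∈ w.edges → f x ≠ f y := by
  induction w with
  | nil => simp
  | cons hadj p ih =>
    rename_i a b c
    simp only [Walk.support_cons, List.map_cons, List.Chain', List.isChain_cons] at h
    obtain ⟨h1, h2⟩ := h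
    have hab : f a ≠ f b := by
      have := h1 (f b) (by
        cases p with
        | nil => simp
        | cons h q => simp)
      exact this
    intro x y hxy
    simp only [Walk.edges_cons, List.mem_cons] at hxy
    rcases hxy with h | h
    · rw [Sym2.eq, Sym2.rel_iff'] at h
      rcases h with ⟨rfl, rfl⟩ | ⟨rfl, rfl⟩
      · exact hab
      · exact hab.symm
    · exact ih h2 x y h

/-- In a connected graph with at least one edge there is a walk traversing
every edge; for such a walk, the conjunction of the not-equal constraints on
the consecutive pairs of (repeated) vertex-variables with domains `{1,2,3}` is
satisfiable iff the graph is 3-colourable. -/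
theorem stmt9 {V : Type*} [Fintype V] (G : SimpleGraph V)
    (hconn : G.Connected) (hE : G.edgeSet.Nonempty) :
    ∃ (u v : V) (w : G.Walk u v),
      (∀ e ∈ G.edgeSet, e ∈ w.edges) ∧
      ((∃ f : V → Fin 3, List.Chain' (· ≠ ·) (w.support.map f)) ↔ G.Colorable 3) := by
  classical
  obtain ⟨e0, he0⟩ := hE
  obtain ⟨a, b⟩ := e0
  obtain ⟨w, hw⟩ := cover_walk G hconn a G.edgeFinset.toList
    (fun e he => (SimpleGraph.mem_edgeFinset).1 (Finset.mem_toList.1 he))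
  have hcov : ∀ e ∈ G.edgeSet, e ∈ w.edges := fun e he =>
    hw e (Finset.mem_toList.2 (SimpleGraph.mem_edgeFinset.2 he))
  refine ⟨a, a, w, hcov, ?_⟩
  constructor
  · rintro ⟨f, hf⟩
    exact ⟨SimpleGraph.Coloring.mk f (fun {x y} hxy =>
      chain_key w f hf x y (hcov _ (G.mem_edgeSet.2 hxy)))⟩
  · rintro ⟨C⟩
    refine ⟨C, ?_⟩
    simp only [List.Chain', List.isChain_map]
    exact List.IsChain.imp (fun x y hxy => C.valid hxy) w.isChain_adj_support
end

section
/- Given a 3SAT formula φ with variables x_1,...,x_n and m clauses, the NValue construction (X_i ∈ {i,−i} for i ≤ n; X_{n+j} ranging over the encoded literals of clause j) satisfies: any assignment from the domains uses at least n distinct values, and uses exactly n distinct values iff the values of X_{n+1},...,X_{n+m} are all contained in {X_1,...,X_n} (regarded as a set). -/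
/-- Counting step of the NValue reduction: for any assignment from the domains
(`X i ∈ {i, -i}`, and `Y j` an encoded literal of clause `j`), at least `n`
distinct values are used, and exactly `n` distinct values are used iff every
`Y j` takes a value among `{X 1, …, X n}`. -/
theorem stmt16 (n m : ℕ) (clause : Fin m → Fin 3 → Fin n × Bool)
    (X : Fin n → ℤ) (Y : Fin m → ℤ)
    (hX : ∀ i, X i = litVal (i, true) ∨ X i = litVal (i, false))
    (hY : ∀ j, ∃ k, Y j = litVal (clause j k)) :
    n ≤ (Finset.image X Finset.univ ∪ Finset.image Y Finset.univ).card ∧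
    ((Finset.image X Finset.univ ∪ Finset.image Y Finset.univ).card = n ↔
      ∀ j, ∃ i, Y j = X i) := by
  have habs : ∀ i, (X i).natAbs = (i : ℕ) + 1 := by
    intro i
    rcases hX i with h | h <;> simp [h, litVal, Int.natAbs_add_of_nonneg] <;> omega
  have hinj : Function.Injective X := by
    intro i i' h
    have := habs i
    rw [h, habs i'] at this
    exact Fin.ext (by omega)
  have hcardX : (Finset.image X Finset.univ).card = n := by
    rw [Finset.card_image_of_injective _ hinj, Finset.card_univ, Fintype.card_fin]
  have hsub : Finset.image X Finset.univ ⊆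
      Finset.image X Finset.univ ∪ Finset.image Y Finset.univ :=
    Finset.subset_union_left
  constructor
  · calc n = (Finset.image X Finset.univ).card := hcardX.symm
      _ ≤ _ := Finset.card_le_card hsub
  · constructor
    · intro hcard j
      have hYsub : Finset.image Y Finset.univ ⊆ Finset.image X Finset.univ := by
        have heq : Finset.image X Finset.univ ∪ Finset.image Y Finset.univ =
            Finset.image X Finset.univ :=
          (Finset.eq_of_subset_of_card_le hsub (by omega)).symm
        intro y hy
        rw [← heq]
        exact Finset.mem_union_right _ hy
      have : Y j ∈ Finset.image X Finset.univ :=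
        hYsub (Finset.mem_image_of_mem Y (Finset.mem_univ j))
      obtain ⟨i, _, hi⟩ := Finset.mem_image.mp this
      exact ⟨i, hi.symm⟩
    · intro h
      have : Finset.image X Finset.univ ∪ Finset.image Y Finset.univ =
          Finset.image X Finset.univ := by
        apply Finset.union_eq_left.mpr
        intro y hy
        obtain ⟨j, _, hj⟩ := Finset.mem_image.mp hy
        obtain ⟨i, hi⟩ := h j
        rw [← hj, hi]
        exact Finset.mem_image_of_mem X (Finset.mem_univ i)
      rw [this, hcardX]
end
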